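/- There are infinitely many n ∈ ℕ with h_n < h_{n+1} < h_{n+2}. -/

import Mathlib

def t (n : ℕ) : ℤ := (-1) ^ ((Nat.digits 2 n).sum)

def h : ℕ → ℤ
  | 0 => 0
  | 1 => 1
  | (n + 2) => t (n + 2) * h (n + 1) + h n

/-!
Since `t (2 ^ k + m) = -t m` for `m < 2 ^ k`, the sequence `m ↦ (-1) ^ m * f (2 ^ k + m)` satisfies
the recurrence again on `m < 2 ^ k` for every solution `f`, so it is a combination of `h` and the
companion solution `e` (with `e 0 = 1`, `e 1 = 0`) whose coefficients are read off from `f` at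
`2 ^ k - 2` and `2 ^ k - 1`. Hence the four values of `h` and `e` at `2 ^ k - 2`, `2 ^ k - 1`
evolve under an explicit quadratic map in `k`, which preserves a sign pattern (alternating between
two shapes) holding at `k = 4`. That pattern forces
`h (2 ^ k + 10) < h (2 ^ k + 11) < h (2 ^ k + 12)`.
-/

lemma t_two_mul (n : ℕ) : t (2 * n) = t n := by
  rcases Nat.eq_zero_or_pos n with rfl | hn
  · rfl
  rw [t, t, Nat.digits_def' (by norm_num) (by omega), Nat.mul_mod_right,
    Nat.mul_div_cancel_left n (by norm_num), List.sum_cons, zero_add]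

lemma t_two_mul_add_one (n : ℕ) : t (2 * n + 1) = -t n := by
  rw [t, t, Nat.digits_def' (by norm_num) (by omega), List.sum_cons,
    show (2 * n + 1) % 2 = 1 by omega, show (2 * n + 1) / 2 = n by omega, pow_add, pow_one,
    neg_one_mul]

lemma t_two_pow_add {k m : ℕ} (hm : m < 2 ^ k) : t (2 ^ k + m) = -t m := by
  induction k generalizing m with
  | zero =>
    obtain rfl : m = 0 := by simpa using hm
    decide
  | succ k ih =>
    obtain ⟨j, rfl | rfl⟩ := Nat.even_or_odd' m
    · rw [pow_succ', ← mul_add, t_two_mul, t_two_mul, ih (by omega)]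
    · rw [pow_succ', ← add_assoc, ← mul_add, t_two_mul_add_one, t_two_mul_add_one,
        ih (by omega)]

def e : ℕ → ℤ
  | 0 => 1
  | 1 => 0
  | (n + 2) => t (n + 2) * e (n + 1) + e n

lemma eq_mul_e_add_mul_h_of_recurrence {f : ℕ → ℤ} {N : ℕ}
    (hf : ∀ m, m + 2 < N → f (m + 2) = t (m + 2) * f (m + 1) + f m) :
    ∀ m < N, f m = f 0 * e m + f 1 * h m
  | 0, _ => by simp [e, h]
  | 1, _ => by simp [e, h]
  | m + 2, hm => by
    rw [hf m hm, eq_mul_e_add_mul_h_of_recurrence hf m (by omega),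
      eq_mul_e_add_mul_h_of_recurrence hf (m + 1) (by omega), e, h]
    ring

lemma h_add_two (n : ℕ) : h (n + 2) = t (n + 2) * h (n + 1) + h n := rfl

lemma e_add_two (n : ℕ) : e (n + 2) = t (n + 2) * e (n + 1) + e n := rfl

section Solution

variable {f : ℕ → ℤ} (hf : ∀ n, f (n + 2) = t (n + 2) * f (n + 1) + f n)
include hf

lemma neg_one_pow_mul_two_pow_add {k m : ℕ} (hm : m < 2 ^ k) :
    (-1) ^ m * f (2 ^ k + m) = f (2 ^ k) * e m - f (2 ^ k + 1) * h m := by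
  have hg := eq_mul_e_add_mul_h_of_recurrence (f := fun m => (-1) ^ m * f (2 ^ k + m)) (N := 2 ^ k)
    (fun m hm => by
      have hrec := hf (2 ^ k + m)
      rw [add_assoc, add_assoc] at hrec
      simp only [hrec, t_two_pow_add hm]
      ring) m hm
  simpa [sub_eq_add_neg] using hg

lemma neg_one_pow_mul_two_pow_add_of_add_two_eq {n k m : ℕ} (hn : n + 2 = 2 ^ k)
    (hm : m < 2 ^ k) :
    (-1) ^ m * f (2 ^ k + m) = (f n - f (n + 1)) * e m - f n * h m := by
  have h₀ : f (2 ^ k) = f n - f (n + 1) := by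
    rw [← hn, hf, hn, ← add_zero (2 ^ k), t_two_pow_add (by omega), show t 0 = 1 by decide]
    ring
  have h₁ : f (2 ^ k + 1) = f n := by
    rw [show 2 ^ k + 1 = n + 1 + 2 by omega, hf, show n + 1 + 2 = 2 ^ k + 1 by omega,
      show n + 1 + 1 = 2 ^ k by omega, t_two_pow_add (by omega), h₀, show t 1 = -1 by decide]
    ring
  rw [neg_one_pow_mul_two_pow_add hf hm, h₀, h₁]

lemma two_pow_add_of_add_two_eq {n k : ℕ} (hn : n + 2 = 2 ^ k) :
    f (2 ^ k + n) = (f n - f (n + 1)) * e n - f n * h n ∧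
      f (2 ^ k + (n + 1)) = f n * h (n + 1) - (f n - f (n + 1)) * e (n + 1) := by
  have hk : k ≠ 0 := by rintro rfl; omega
  obtain ⟨j, hj⟩ := dvd_pow_self 2 hk
  have hn_even : Even n := ⟨j - 1, by omega⟩
  have h₀ := neg_one_pow_mul_two_pow_add_of_add_two_eq hf hn (m := n) (by omega)
  have h₁ := neg_one_pow_mul_two_pow_add_of_add_two_eq hf hn (m := n + 1) (by omega)
  rw [hn_even.neg_one_pow, one_mul] at h₀
  rw [(hn_even.add_one).neg_one_pow, neg_one_mul] at h₁
  exact ⟨h₀, by linarith⟩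

end Solution

/-- The two shapes taken by `(h n, h (n + 1), e n, e (n + 1))` at `n = 2 ^ k - 2`, `k ≥ 4`. -/
def SignPattern (x₀ x₁ y₀ y₁ : ℤ) : Prop :=
  (x₀ < x₁ ∧ x₁ < 0 ∧ 0 < y₁ ∧ y₁ < y₀) ∨
    (x₀ < 0 ∧ 0 < x₁ ∧ x₁ < -x₀ ∧ y₁ < 0 ∧ 0 < y₀ ∧ -y₁ < y₀)

lemma SignPattern.step {x₀ x₁ y₀ y₁ : ℤ} (hP : SignPattern x₀ x₁ y₀ y₁) :
    SignPattern ((x₀ - x₁) * y₀ - x₀ * x₀) (x₀ * x₁ - (x₀ - x₁) * y₁)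
      ((y₀ - y₁) * y₀ - y₀ * x₀) (y₀ * x₁ - (y₀ - y₁) * y₁) := by
  rcases hP with ⟨hx, hx₁, hy₁, hy⟩ | ⟨hx₀, hx₁, hx, hy₁, hy₀, hy⟩
  · have hx₀ : x₀ < 0 := hx.trans hx₁
    have hy₀ : 0 < y₀ := hy₁.trans hy
    right
    refine ⟨?_, ?_, ?_, ?_, ?_, ?_⟩
    · nlinarith [mul_pos_of_neg_of_neg hx₀ hx₀, mul_neg_of_neg_of_pos (sub_neg.2 hx) hy₀]
    · nlinarith [mul_pos_of_neg_of_neg hx₀ hx₁, mul_pos (sub_pos.2 hx) hy₁]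
    · nlinarith [mul_pos (sub_pos.2 hx) (neg_pos.2 (by linarith : x₀ + y₁ - y₀ < 0))]
    · nlinarith [mul_neg_of_pos_of_neg hy₀ hx₁, mul_pos (sub_pos.2 hy) hy₁]
    · nlinarith [mul_pos hy₀ (sub_pos.2 (by linarith : y₁ < y₀ - x₀))]
    · nlinarith [mul_neg_of_pos_of_neg hy₀ (sub_neg.2 hx), sq_nonneg (y₀ - y₁)]
  · left
    refine ⟨?_, ?_, ?_, ?_⟩
    · nlinarith [mul_neg_of_neg_of_pos hx₀ (by linarith : 0 < -(x₀ + x₁)),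
        mul_pos (sub_pos.2 (hx₀.trans hx₁)) (by linarith : 0 < y₀ + y₁)]
    · nlinarith [mul_neg_of_neg_of_pos hx₀ hx₁,
        mul_pos (sub_pos.2 (hx₀.trans hx₁)) (neg_pos.2 hy₁)]
    · nlinarith [mul_pos hy₀ hx₁, mul_pos (sub_pos.2 (hy₁.trans hy₀)) (neg_pos.2 hy₁)]
    · nlinarith [mul_neg_of_pos_of_neg hy₀ (by linarith : x₀ + x₁ < 0),
        mul_pos (sub_pos.2 (hy₁.trans hy₀)) (by linarith : 0 < y₀ + y₁)]

lemma exists_add_two_eq_two_pow {k : ℕ} (hk : 1 ≤ k) : ∃ n, n + 2 = 2 ^ k :=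
  ⟨2 ^ k - 2, by have := Nat.pow_le_pow_right two_pos hk; omega⟩

lemma signPattern_of_add_two_eq_two_pow {k n : ℕ} (hk : 4 ≤ k) (hn : n + 2 = 2 ^ k) :
    SignPattern (h n) (h (n + 1)) (e n) (e (n + 1)) := by
  induction k, hk using Nat.le_induction generalizing n with
  | base =>
    obtain rfl : n = 14 := by simpa using hn
    left
    decide
  | succ k hk ih =>
    obtain ⟨m, hm⟩ := exists_add_two_eq_two_pow (k := k) (by omega)
    obtain rfl : n = 2 ^ k + m := by rw [pow_succ] at hn; omega
    obtain ⟨hh₀, hh₁⟩ := two_pow_add_of_add_two_eq h_add_two hm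
    obtain ⟨he₀, he₁⟩ := two_pow_add_of_add_two_eq e_add_two hm
    rw [add_assoc, hh₀, hh₁, he₀, he₁]
    exact (ih hm).step

lemma h_two_pow_add_ten_lt_lt {k : ℕ} (hk : 4 ≤ k) :
    h (2 ^ k + 10) < h (2 ^ k + 11) ∧ h (2 ^ k + 11) < h (2 ^ k + 12) := by
  obtain ⟨n, hn⟩ := exists_add_two_eq_two_pow (k := k) (by omega)
  have h16 : 16 ≤ 2 ^ k := Nat.pow_le_pow_right two_pos hk
  have h₁₀ := neg_one_pow_mul_two_pow_add_of_add_two_eq h_add_two hn (m := 10) (by omega)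
  have h₁₁ := neg_one_pow_mul_two_pow_add_of_add_two_eq h_add_two hn (m := 11) (by omega)
  have h₁₂ := neg_one_pow_mul_two_pow_add_of_add_two_eq h_add_two hn (m := 12) (by omega)
  rw [show h 10 = -5 by decide, show e 10 = 2 by decide] at h₁₀
  rw [show h 11 = 3 by decide, show e 11 = -1 by decide] at h₁₁
  rw [show h 12 = -2 by decide, show e 12 = 1 by decide] at h₁₂
  -- with `x₀ = h n`, `x₁ = h (n + 1)` these read `h (2 ^ k + 10) = 7 x₀ - 2 x₁`,
  -- `h (2 ^ k + 11) = 4 x₀ - x₁`, `h (2 ^ k + 12) = 3 x₀ - x₁`,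
  -- and both shapes of the pattern give `x₀ < 0` and `3 x₀ < x₁`
  norm_num at h₁₀ h₁₁ h₁₂
  rcases signPattern_of_add_two_eq_two_pow hk hn with ⟨hx, hx₁, -⟩ | ⟨hx₀, hx₁, -⟩ <;>
    constructor <;> linarith

theorem stmt8 : {n : ℕ | h n < h (n + 1) ∧ h (n + 1) < h (n + 2)}.Infinite := by
  refine Set.infinite_of_forall_exists_gt fun a => ⟨2 ^ (a + 4) + 10, ?_, ?_⟩
  · exact h_two_pow_add_ten_lt_lt (by omega)
  · have := (a + 4).lt_two_pow_self
    omega
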